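/- arXiv:2510.07525 — 3 statements merged into one kernel-verified Lean document; each statement's English description precedes it below -/
import Mathlib

section
/- Let T ∈ S^3(R^2) be a symmetric tensor (parametrized by t_0, t_1, t_2, t_3 with T_{i_1 i_2 i_3} = t_{i_1+i_2+i_3} for binary indices) with t_1 = t_2 = 0, and let Q be the rotation matrix with entries a, -b; b, a where a² + b² = 1 and a, b ≠ 0. If Q • T also satisfies the conditions [Q•T]_{001} = [Q•T]_{011} = 0, then T = 0 (i.e., t_0 = t_3 = 0). -/
/-- The orthogonal (mode-wise) action of a matrix `Q` on an order-`d` tensor: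
`(Q • T)_{i_1...i_d} = Σ_j Q_{i_1 j_1} ⋯ Q_{i_d j_d} T_{j_1...j_d}`. -/
noncomputable def tensorAct {d n : ℕ} (Q : Matrix (Fin n) (Fin n) ℝ)
    (T : (Fin d → Fin n) → ℝ) : (Fin d → Fin n) → ℝ :=
  fun i => ∑ j : Fin d → Fin n, (∏ k, Q (i k) (j k)) * T j

/-- An explicit enumeration of `Fin 3 → Fin 2` by `Fin 8`. -/
def e8Aux : Fin 8 ≃ (Fin 3 → Fin 2) :=
  (finCongr (by norm_num : 8 = 2 ^ 3)).trans finFunctionFinEquiv.symm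

/-- A sum over all binary triples expands into eight terms. -/
theorem sum_fin32Aux (F : (Fin 3 → Fin 2) → ℝ) :
    ∑ j : Fin 3 → Fin 2, F j =
      F ![0,0,0] + F ![0,0,1] + F ![0,1,0] + F ![0,1,1] +
      F ![1,0,0] + F ![1,0,1] + F ![1,1,0] + F ![1,1,1] := by
  rw [← e8Aux.sum_comp, Fin.sum_univ_eight]
  rw [show e8Aux 0 = ![0,0,0] from by decide, show e8Aux 1 = ![1,0,0] from by decide,
    show e8Aux 2 = ![0,1,0] from by decide, show e8Aux 3 = ![1,1,0] from by decide,
    show e8Aux 4 = ![0,0,1] from by decide, show e8Aux 5 = ![1,0,1] from by decide,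
    show e8Aux 6 = ![0,1,1] from by decide, show e8Aux 7 = ![1,1,1] from by decide]
  ring

/-- Let `T ∈ S³(ℝ²)` be symmetric with entries `T_i = t_{|i|}` (number of ones in the
binary index), with `t₁ = t₂ = 0`, and let `Q` be the rotation with entries
`a, -b; b, a`, `a² + b² = 1`, `a, b ≠ 0`. If `Q • T` also has `[Q•T]_{001} = [Q•T]_{011} = 0`,
then `T = 0`, i.e. `t₀ = t₃ = 0`. -/
theorem order3_pmi_rotation_forces_zero
    (t : ℕ → ℝ) (T : (Fin 3 → Fin 2) → ℝ)
    (hT : ∀ i : Fin 3 → Fin 2, T i = t (∑ k, ((i k : ℕ))))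
    (ht1 : t 1 = 0) (ht2 : t 2 = 0)
    (a b : ℝ) (hab : a ^ 2 + b ^ 2 = 1) (ha : a ≠ 0) (hb : b ≠ 0)
    (Q : Matrix (Fin 2) (Fin 2) ℝ) (hQ : Q = !![a, -b; b, a])
    (h001 : tensorAct Q T ![0, 0, 1] = 0)
    (h011 : tensorAct Q T ![0, 1, 1] = 0) :
    t 0 = 0 ∧ t 3 = 0 := by
  simp only [tensorAct, sum_fin32Aux, Fin.prod_univ_three, hT, hQ,
    Fin.sum_univ_three] at h001 h011
  norm_num [ht1, ht2, Matrix.cons_val_two, Matrix.cons_val_one, Matrix.cons_val_zero, Matrix.tail_cons, Matrix.head_cons] at h001 h011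
  constructor
  · have h : a * b * t 0 = 0 := by
      linear_combination a * h001 + b * h011 - a * b * t 0 * hab
    rcases mul_eq_zero.1 h with h' | h'
    · exact absurd (mul_eq_zero.1 h') (by tauto)
    · exact h'
  · have h : a * b * t 3 = 0 := by
      linear_combination b * h001 - a * h011 - a * b * t 3 * hab
    rcases mul_eq_zero.1 h with h' | h'
    · exact absurd (mul_eq_zero.1 h') (by tauto)
    · exact h'
end

section
/- Let T ∈ S^4(R^2) be a symmetric tensor with T_{0001} = T_{0111} = 0 (in the t-parametrization, t_1 = t_3 = 0), and let Q ∈ SO(2) have entries a, -b; b, a with a² + b² = 1 and a, b ≠ 0. Then Q • T again has these zero entries if and only if either (a ≠ ±b and (t_0, t_2, t_4) is proportional to (3, 1, 3)) or (a = ±b and t_0 = t_4). In particular, if t_0 ≠ t_4 and (t_0,t_2,t_4) is not proportional to (3,1,3), no such Q exists. -/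
private def e4aux : (Fin 2 × Fin 2 × Fin 2 × Fin 2) ≃ (Fin 4 → Fin 2) where
  toFun p := ![p.1, p.2.1, p.2.2.1, p.2.2.2]
  invFun j := (j 0, j 1, j 2, j 3)
  left_inv p := rfl
  right_inv j := by funext k; fin_cases k <;> rfl

private lemma sum_fn4 (f : (Fin 4 → Fin 2) → ℝ) :
    ∑ j : Fin 4 → Fin 2, f j =
      ∑ x : Fin 2, ∑ y : Fin 2, ∑ z : Fin 2, ∑ w : Fin 2, f ![x, y, z, w] := by
  rw [← (Fintype.sum_equiv e4aux (fun p => f (e4aux p)) f (fun _ => rfl))]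
  rw [Fintype.sum_prod_type]
  simp [Fintype.sum_prod_type, e4aux]
  rfl

/-- Let `T ∈ S⁴(ℝ²)` with entries `T_i = t_{|i|}`, `t₁ = t₃ = 0`, and
`Q ∈ SO(2)` with entries `a, -b; b, a`, `a² + b² = 1`, `a, b ≠ 0`. Then
`[Q•T]_{0001} = [Q•T]_{0111} = 0` iff either (`a ≠ ±b` and `(t₀, t₂, t₄)` is proportional
to `(3, 1, 3)`) or (`a = ±b` and `t₀ = t₄`). In particular, if `t₀ ≠ t₄` and
`(t₀, t₂, t₄)` is not proportional to `(3, 1, 3)`, no such `Q` preserves the zeros. -/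
theorem order4_pmi_rotation_characterization
    (t : ℕ → ℝ) (T : (Fin 4 → Fin 2) → ℝ)
    (hT : ∀ i : Fin 4 → Fin 2, T i = t (∑ k, ((i k : ℕ))))
    (ht1 : t 1 = 0) (ht3 : t 3 = 0)
    (a b : ℝ) (hab : a ^ 2 + b ^ 2 = 1) (ha : a ≠ 0) (hb : b ≠ 0)
    (Q : Matrix (Fin 2) (Fin 2) ℝ) (hQ : Q = !![a, -b; b, a]) :
    (tensorAct Q T ![0, 0, 0, 1] = 0 ∧ tensorAct Q T ![0, 1, 1, 1] = 0) ↔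
      ((a ≠ b ∧ a ≠ -b ∧ ∃ c : ℝ, t 0 = 3 * c ∧ t 2 = c ∧ t 4 = 3 * c) ∨
        ((a = b ∨ a = -b) ∧ t 0 = t 4)) := by
  have he1 : tensorAct Q T ![0, 0, 0, 1] =
      a^3*b*t 0 - 3*(a^2-b^2)*a*b*t 2 - a*b^3*t 4 := by
    unfold tensorAct
    rw [sum_fn4]
    simp only [hT, hQ, Fin.sum_univ_two, Fin.prod_univ_four, Fin.sum_univ_four,
      Matrix.cons_val_zero, Matrix.cons_val_one, Matrix.head_cons, Matrix.cons_val',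
      Matrix.cons_val_fin_one, Matrix.empty_val', Matrix.head_fin_const,
      Matrix.of_apply, Fin.isValue, Fin.val_zero, Fin.val_one, Matrix.cons_val]
    norm_num [ht1, ht3]
    ring
  have he2 : tensorAct Q T ![0, 1, 1, 1] =
      a*b^3*t 0 + 3*(a^2-b^2)*a*b*t 2 - a^3*b*t 4 := by
    unfold tensorAct
    rw [sum_fn4]
    simp only [hT, hQ, Fin.sum_univ_two, Fin.prod_univ_four, Fin.sum_univ_four,
      Matrix.cons_val_zero, Matrix.cons_val_one, Matrix.head_cons, Matrix.cons_val',
      Matrix.cons_val_fin_one, Matrix.empty_val', Matrix.head_fin_const,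
      Matrix.of_apply, Fin.isValue, Fin.val_zero, Fin.val_one, Matrix.cons_val]
    norm_num [ht1, ht3]
    ring
  rw [he1, he2]
  have hab0 : a * b ≠ 0 := mul_ne_zero ha hb
  constructor
  · rintro ⟨h1, h2⟩
    have hsum : a * b * (t 0 - t 4) = 0 := by
      linear_combination h1 + h2 - a * b * (t 0 - t 4) * hab
    have h04 : t 0 = t 4 := by
      have := (mul_eq_zero.mp hsum).resolve_left hab0
      linarith
    have hdiff : a * b * ((a - b) * (a + b)) * (t 0 - 6 * t 2 + t 4) = 0 := by
      linear_combination h1 - h2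
    by_cases hb1 : a = b
    · exact Or.inr ⟨Or.inl hb1, h04⟩
    by_cases hb2 : a = -b
    · exact Or.inr ⟨Or.inr hb2, h04⟩
    · refine Or.inl ⟨hb1, hb2, t 2, ?_, rfl, ?_⟩
      · have hne : a * b * ((a - b) * (a + b)) ≠ 0 :=
          mul_ne_zero hab0 (mul_ne_zero (sub_ne_zero.mpr hb1)
            (by intro h; exact hb2 (by linarith)))
        have := (mul_eq_zero.mp hdiff).resolve_left hne
        linarith
      · have hne : a * b * ((a - b) * (a + b)) ≠ 0 :=
          mul_ne_zero hab0 (mul_ne_zero (sub_ne_zero.mpr hb1)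
            (by intro h; exact hb2 (by linarith)))
        have := (mul_eq_zero.mp hdiff).resolve_left hne
        linarith
  · rintro (⟨-, -, c, h0, h2, h4⟩ | ⟨(rfl | h), h04⟩)
    · rw [h0, h2, h4]; constructor <;> ring
    · rw [h04]; constructor <;> ring
    · subst h; rw [h04]; constructor <;> ring
end

section
/- Let κ_diag = λ_1 e_1^{⊗3} + λ_2 e_2^{⊗3} ∈ S^3(R^2) and for θ ∈ R let q_1 = (cos θ, sin θ), q_2 = (-sin θ, cos θ). Define Φ(θ) = ⟨κ_diag, q_1^{⊗3}⟩² + ⟨κ_diag, q_2^{⊗3}⟩². Then Φ(θ) = (λ_1² + λ_2²)(1 - 3 sin²θ cos²θ), and consequently Φ(0) - Φ(θ) = (3/4)(λ_1² + λ_2²) sin²(2θ) ≥ 0, so θ ∈ {kπ/2 : k ∈ Z} are exactly the global maximizers when (λ_1, λ_2) ≠ (0,0). -/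
open Real

/-- The diagonal order-3 tensor `λ₁ e₁^{⊗3} + λ₂ e₂^{⊗3} ∈ S³(ℝ²)`. -/
noncomputable def kappaDiag3 (l1 l2 : ℝ) : (Fin 3 → Fin 2) → ℝ :=
  fun i => if ∀ k, i k = 0 then l1 else if ∀ k, i k = 1 then l2 else 0

/-- The ICA contrast `Φ(θ) = ⟨κ_diag, q₁^{⊗3}⟩² + ⟨κ_diag, q₂^{⊗3}⟩²` for the rotated
frame `q₁ = (cos θ, sin θ)`, `q₂ = (-sin θ, cos θ)`. -/
noncomputable def Phi3 (l1 l2 θ : ℝ) : ℝ :=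
  (∑ i : Fin 3 → Fin 2, kappaDiag3 l1 l2 i * ∏ k, (![cos θ, sin θ]) (i k)) ^ 2 +
    (∑ i : Fin 3 → Fin 2, kappaDiag3 l1 l2 i * ∏ k, (![-sin θ, cos θ]) (i k)) ^ 2

lemma kappa_sum (l1 l2 : ℝ) (v : Fin 2 → ℝ) :
    ∑ i : Fin 3 → Fin 2, kappaDiag3 l1 l2 i * ∏ k, v (i k)
      = l1 * v 0 ^ 3 + l2 * v 1 ^ 3 := by
  rw [Fintype.sum_eq_add (fun _ => (0 : Fin 2)) (fun _ => (1 : Fin 2))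
      (by intro h; exact absurd (congrFun h 0) (by decide))
      (fun c hc => by
        have h0 : ¬ ∀ k, c k = 0 := fun h => hc.1 (funext h)
        have h1 : ¬ ∀ k, c k = 1 := fun h => hc.2 (funext h)
        simp [kappaDiag3, h0, h1])]
  simp [kappaDiag3, Fin.prod_univ_three]

lemma Phi3_eq (l1 l2 θ : ℝ) :
    Phi3 l1 l2 θ = (l1 ^ 2 + l2 ^ 2) * (1 - 3 * sin θ ^ 2 * cos θ ^ 2) := by
  have h := sin_sq_add_cos_sq θ
  simp only [Phi3, kappa_sum]
  simp only [Matrix.cons_val_zero, Matrix.cons_val_one, Matrix.head_cons]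
  linear_combination (l1 ^ 2 + l2 ^ 2) *
    ((sin θ ^ 2 + cos θ ^ 2) ^ 2 + (sin θ ^ 2 + cos θ ^ 2) + 1 - 3 * sin θ ^ 2 * cos θ ^ 2) * h

/-- `Φ(θ) = (λ₁² + λ₂²)(1 - 3 sin²θ cos²θ)`, hence
`Φ(0) - Φ(θ) = (3/4)(λ₁² + λ₂²) sin²(2θ) ≥ 0`, and when `(λ₁, λ₂) ≠ (0, 0)` the global
maximizers are exactly the angles `θ = kπ/2`, `k ∈ ℤ`. -/
theorem Phi3_formula (l1 l2 : ℝ) :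
    (∀ θ : ℝ, Phi3 l1 l2 θ = (l1 ^ 2 + l2 ^ 2) * (1 - 3 * sin θ ^ 2 * cos θ ^ 2)) ∧
    (∀ θ : ℝ, Phi3 l1 l2 0 - Phi3 l1 l2 θ =
      (3 / 4) * (l1 ^ 2 + l2 ^ 2) * sin (2 * θ) ^ 2) ∧
    (∀ θ : ℝ, 0 ≤ Phi3 l1 l2 0 - Phi3 l1 l2 θ) ∧
    ((l1, l2) ≠ (0, 0) → ∀ θ : ℝ,
      ((∀ θ' : ℝ, Phi3 l1 l2 θ' ≤ Phi3 l1 l2 θ) ↔ ∃ k : ℤ, θ = k * π / 2)) := by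
  have hdiff : ∀ θ : ℝ, Phi3 l1 l2 0 - Phi3 l1 l2 θ =
      (3 / 4) * (l1 ^ 2 + l2 ^ 2) * sin (2 * θ) ^ 2 := by
    intro θ
    rw [Phi3_eq, Phi3_eq, sin_two_mul]
    simp
    ring
  refine ⟨fun θ => Phi3_eq l1 l2 θ, hdiff, fun θ => by rw [hdiff]; positivity, ?_⟩
  intro hne θ
  have hl : 0 < l1 ^ 2 + l2 ^ 2 := by
    rcases (not_and_or.mp (fun h => hne (Prod.ext h.1 h.2))) with h | h <;> positivity
  constructor
  · intro hmax
    have h1 := hmax 0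
    have h2 := hdiff θ
    have hs : sin (2 * θ) ^ 2 = 0 := by nlinarith [sq_nonneg (sin (2 * θ))]
    have hs0 : sin (2 * θ) = 0 := by
      have := sq_eq_zero_iff.mp hs; exact this
    obtain ⟨k, hk⟩ := Real.sin_eq_zero_iff.mp hs0
    exact ⟨k, by linarith⟩
  · rintro ⟨k, rfl⟩ θ'
    have h0 : sin (2 * ((k : ℝ) * π / 2)) = 0 := by
      have : (2 : ℝ) * ((k : ℝ) * π / 2) = k * π := by ring
      rw [this]
      exact Real.sin_int_mul_pi k
    have h2 := hdiff ((k : ℝ) * π / 2)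
    have h3 := hdiff θ'
    rw [h0] at h2
    have h4 : 0 ≤ Phi3 l1 l2 0 - Phi3 l1 l2 θ' := by rw [h3]; positivity
    nlinarith
end
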